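/- Let k be an algebraically closed field with a nontrivial valuation val : k → ℝ ∪ {∞}. Let f, g ∈ k[x^{±1}, y^{±1}] be Laurent polynomials with coefficient families (c_i), (d_i) such that: val(c_{(0,0)}) = val(d_{(0,0)}) = 0; val(c_{(1,0)}) = val(d_{(1,0)}) = p₁ ∈ ℝ; and c_{(i,j)} = d_{(i,j)} = 0 whenever j < 0. Let y₊ ∈ ℝ and let L := {(p₁, t) : t ≤ y₊} be a downward vertical ray. Assume there is a labeling {f₁, f₂} = {f, g} and an integer a such that: the set of indices maximizing i ↦ τ(f₁; i; (p₁, y₊)) is exactly {(0,0), (1,0), (a,1)}; the set of indices maximizing i ↦ τ(f₂; i; (p₁, y₊)) is exactly {(0,0), (1,0)}; and for every t < y₊, the set of indices maximizing i ↦ τ(f; i; (p₁, t)) and the set maximizing i ↦ τ(g; i; (p₁, t)) are both exactly {(0,0), (1,0)}. Then the set trop(V(f, g)) ∩ L contains at most one point, where trop(V(f, g)) := {(−val(x), −val(y)) : x, y ∈ k∖{0}, f(x,y) = 0 and g(x,y) = 0}. -/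

import Mathlib

/-- Interpret a value in `ℝ ∪ {∞}` as an extended real number. -/
noncomputable def wte (x : WithTop ℝ) : EReal :=
  WithTop.recTopCoe ⊤ (fun r : ℝ => (r : EReal)) x

/-- `τ(F; i; P) = -val(F_i) + i·P ∈ ℝ ∪ {-∞}`. -/
noncomputable def tau {k : Type*} [Field k] (val : k → WithTop ℝ)
    (F : ℤ × ℤ → k) (i : ℤ × ℤ) (P : ℝ × ℝ) : EReal :=
  -(wte (val (F i))) + (((i.1 : ℝ) * P.1 + (i.2 : ℝ) * P.2 : ℝ) : EReal)

/-- Evaluation of a Laurent polynomial (given by its coefficient family) at a point of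
the torus `(k∗)²`. -/
noncomputable def laurentEval {k : Type*} [Field k] (f : (ℤ × ℤ) →₀ k) (x y : k) : k :=
  f.sum fun i c => c * x ^ i.1 * y ^ i.2

/-- `trop(V(f, g))`: the set of coordinatewise negated valuations of common zeros of `f`
and `g` in the torus. -/
noncomputable def tropV {k : Type*} [Field k] (val : k → WithTop ℝ)
    (f g : (ℤ × ℤ) →₀ k) : Set (ℝ × ℝ) :=
  {P | ∃ x y : k, x ≠ 0 ∧ y ≠ 0 ∧ laurentEval f x y = 0 ∧ laurentEval g x y = 0 ∧
        val x = ((-P.1 : ℝ) : WithTop ℝ) ∧ val y = ((-P.2 : ℝ) : WithTop ℝ)}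


section ValLemmas
variable {k : Type*} [Field k] (val : k → WithTop ℝ)
  (hval_mul : ∀ a b : k, val (a * b) = val a + val b)
  (hval_add : ∀ a b : k, min (val a) (val b) ≤ val (a + b))
  (hval_top : ∀ a : k, val a = ⊤ ↔ a = 0)

include hval_top in
lemma v_zero : val 0 = ⊤ := (hval_top 0).2 rfl

include hval_mul hval_top in
lemma v_one : val 1 = 0 := by
  have h := hval_mul 1 1
  rw [mul_one] at h
  have hne : val 1 ≠ ⊤ := fun h' => one_ne_zero ((hval_top 1).1 h')
  rcases WithTop.ne_top_iff_exists.1 hne with ⟨r, hr⟩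
  rw [← hr] at h ⊢
  have hr : r = r + r := by exact_mod_cast h
  have : r = 0 := by linarith
  simp [this]

include hval_mul hval_top in
lemma v_negone : val (-1 : k) = 0 := by
  have h := hval_mul (-1 : k) (-1)
  rw [neg_mul_neg, one_mul, v_one val hval_mul hval_top] at h
  have hne : val (-1 : k) ≠ ⊤ := fun h' => by
    have := (hval_top _).1 h'; norm_num at this
  rcases WithTop.ne_top_iff_exists.1 hne with ⟨r, hr⟩
  rw [← hr] at h ⊢
  have hr : r + r = 0 := by exact_mod_cast h.symm
  have : r = 0 := by linarith
  simp [this]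

include hval_mul hval_top in
lemma v_neg (z : k) : val (-z) = val z := by
  have : (-z) = (-1) * z := by ring
  rw [this, hval_mul, v_negone val hval_mul hval_top, zero_add]

include hval_mul hval_add hval_top in
lemma v_sub_min (a b : k) : min (val a) (val b) ≤ val (a - b) := by
  have := hval_add a (-b)
  rwa [v_neg val hval_mul hval_top, ← sub_eq_add_neg] at this

include hval_mul hval_add hval_top in
lemma v_add_eq_left {a b : k} (h : val a < val b) : val (a + b) = val a := by
  refine le_antisymm ?_ ?_
  · have h2 := v_sub_min val hval_mul hval_add hval_top (a + b) b
    rw [add_sub_cancel_right] at h2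
    rcases min_le_iff.1 h2 with h3 | h3
    · exact h3
    · exact absurd h3 (not_le.2 h)
  · calc val a = min (val a) (val b) := (min_eq_left h.le).symm
    _ ≤ val (a + b) := hval_add a b

include hval_mul hval_add hval_top in
lemma v_sub_eq_right {a b : k} (h : val b < val a) : val (a - b) = val b := by
  rw [sub_eq_add_neg, add_comm]
  rw [← v_neg val hval_mul hval_top b] at h
  exact (v_add_eq_left val hval_mul hval_add hval_top h).trans
    (v_neg val hval_mul hval_top b)

include hval_mul hval_top in
lemma v_zpow {x : k} (hx : x ≠ 0) {r : ℝ} (hr : val x = (r : WithTop ℝ)) :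
    ∀ n : ℤ, val (x ^ n) = (((n : ℝ) * r : ℝ) : WithTop ℝ) := by
  have hnat : ∀ n : ℕ, val (x ^ (n : ℤ)) = (((n : ℝ) * r : ℝ) : WithTop ℝ) := by
    intro n
    induction n with
    | zero => simpa using v_one val hval_mul hval_top
    | succ n ih =>
      have hc : ((n + 1 : ℕ) : ℤ) = (n : ℤ) + 1 := by push_cast; ring
      have hstep : x ^ ((n : ℤ) + 1) = x ^ (n : ℤ) * x := by
        rw [zpow_add_one₀ hx]
      rw [hc, hstep, hval_mul, ih, hr, ← WithTop.coe_add]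
      rw [WithTop.coe_eq_coe]
      push_cast
      ring
  intro n
  rcases le_or_gt 0 n with hn | hn
  · lift n to ℕ using hn
    exact hnat n
  · have hmn : (0:ℤ) ≤ -n := by omega
    have h1 : x ^ n * x ^ (-n) = 1 := by
      rw [← zpow_add₀ hx]; simp
    have h2 := hval_mul (x ^ n) (x ^ (-n))
    rw [h1, v_one val hval_mul hval_top] at h2
    lift (-n) to ℕ using hmn with m hm
    rw [hnat m] at h2
    have hne : val (x ^ n) ≠ ⊤ := by
      intro h'
      exact zpow_ne_zero n hx ((hval_top _).1 h')
    rcases WithTop.ne_top_iff_exists.1 hne with ⟨s, hs⟩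
    rw [← hs] at h2 ⊢
    have hsm : s + (m : ℝ) * r = 0 := by exact_mod_cast h2.symm
    have hmn' : (n : ℝ) = -(m : ℝ) := by
      have h3 : (m : ℤ) = -n := hm
      have : ((m : ℤ) : ℝ) = ((-n : ℤ) : ℝ) := by rw [h3]
      push_cast at this
      linarith
    norm_cast
    rw [hmn']
    linarith

include hval_add hval_top in
lemma v_sum {ι : Type*} (s : Finset ι) (F : ι → k) (c : WithTop ℝ)
    (h : ∀ i ∈ s, c ≤ val (F i)) : c ≤ val (∑ i ∈ s, F i) := by
  induction s using Finset.cons_induction with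
  | empty => simp [v_zero val hval_top]
  | cons i s hi ih =>
    rw [Finset.sum_cons]
    refine le_trans ?_ (hval_add _ _)
    rw [le_min_iff]
    exact ⟨h i (Finset.mem_cons_self i s), ih fun j hj => h j (Finset.mem_cons_of_mem hj)⟩

end ValLemmas

@[simp] lemma wte_coe (r : ℝ) : wte (r : WithTop ℝ) = (r : EReal) := rfl
@[simp] lemma wte_top : wte (⊤ : WithTop ℝ) = ⊤ := rfl

section T
variable {k : Type*} [Field k] (val : k → WithTop ℝ)

lemma tau_coe (F : ℤ × ℤ → k) (i : ℤ × ℤ) (P : ℝ × ℝ) {r : ℝ}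
    (h : val (F i) = (r : WithTop ℝ)) :
    tau val F i P = (((i.1 : ℝ) * P.1 + (i.2 : ℝ) * P.2 - r : ℝ) : EReal) := by
  rw [tau, h, wte_coe, ← EReal.coe_neg, ← EReal.coe_add, EReal.coe_eq_coe_iff]
  ring

lemma tau_bot (F : ℤ × ℤ → k) (i : ℤ × ℤ) (P : ℝ × ℝ)
    (h : val (F i) = ⊤) : tau val F i P = ⊥ := by
  rw [tau, h, wte_top]
  simp

-- if tau is 0 then val (F i) is determined
lemma val_of_tau_eq_zero (F : ℤ × ℤ → k) (i : ℤ × ℤ) (P : ℝ × ℝ)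
    (h : tau val F i P = 0) :
    val (F i) = (((i.1 : ℝ) * P.1 + (i.2 : ℝ) * P.2 : ℝ) : WithTop ℝ) := by
  rcases eq_or_ne (val (F i)) ⊤ with ht | ht
  · rw [tau_bot val F i P ht] at h
    exact absurd h (by simp)
  · rcases WithTop.ne_top_iff_exists.1 ht with ⟨r, hr⟩
    rw [tau_coe val F i P hr.symm] at h
    have : (i.1 : ℝ) * P.1 + (i.2 : ℝ) * P.2 - r = 0 := by exact_mod_cast h
    rw [← hr]
    norm_cast
    linarith

lemma real_of_tau_lt_zero (F : ℤ × ℤ → k) (i : ℤ × ℤ) (P : ℝ × ℝ)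
    (h : tau val F i P < 0) (hne : val (F i) ≠ ⊤) :
    ∃ r : ℝ, val (F i) = (r : WithTop ℝ) ∧ (i.1 : ℝ) * P.1 + (i.2 : ℝ) * P.2 < r := by
  rcases WithTop.ne_top_iff_exists.1 hne with ⟨r, hr⟩
  refine ⟨r, hr.symm, ?_⟩
  rw [tau_coe val F i P hr.symm] at h
  have : ((i.1 : ℝ) * P.1 + (i.2 : ℝ) * P.2 - r : ℝ) < ((0:ℝ) : EReal) := by exact_mod_cast h
  have := EReal.coe_lt_coe_iff.1 (by exact_mod_cast this)
  linarith

end T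

-- existence of a uniform positive margin over a finite set
lemma exists_margin (s : Finset (ℤ × ℤ)) (w : ℤ × ℤ → WithTop ℝ) (q : ℤ × ℤ → ℝ)
    (h : ∀ i ∈ s, ((q i : ℝ) : WithTop ℝ) < w i) :
    ∃ μ : ℝ, 0 < μ ∧ ∀ i ∈ s, ((μ + q i : ℝ) : WithTop ℝ) ≤ w i := by
  induction s using Finset.cons_induction with
  | empty => exact ⟨1, one_pos, by simp⟩
  | cons i s hi ih =>
    obtain ⟨μ, hμ, hb⟩ := ih fun j hj => h j (Finset.mem_cons_of_mem hj)
    have hih := h i (Finset.mem_cons_self i s)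
    rcases eq_or_ne (w i) ⊤ with ht | ht
    · exact ⟨μ, hμ, fun j hj => by
        rcases Finset.mem_cons.1 hj with rfl | hj
        · rw [ht]; exact le_top
        · exact hb j hj⟩
    · rcases WithTop.ne_top_iff_exists.1 ht with ⟨r, hr⟩
      rw [← hr, WithTop.coe_lt_coe] at hih
      refine ⟨min μ (r - q i), lt_min hμ (by linarith), fun j hj => ?_⟩
      rcases Finset.mem_cons.1 hj with rfl | hj
      · rw [← hr, WithTop.coe_le_coe]
        have : min μ (r - q j) ≤ r - q j := min_le_right _ _
        linarith
      · refine le_trans ?_ (hb j hj)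
        rw [WithTop.coe_le_coe]
        have : min μ (r - q i) ≤ μ := min_le_left _ _
        linarith


section ValLemmas
variable {k : Type*} [Field k] (val : k → WithTop ℝ)
  (hval_mul : ∀ a b : k, val (a * b) = val a + val b)
  (hval_add : ∀ a b : k, min (val a) (val b) ≤ val (a + b))
  (hval_top : ∀ a : k, val a = ⊤ ↔ a = 0)
variable (v_zpow' : ∀ {x : k}, x ≠ 0 → ∀ {r : ℝ}, val x = (r : WithTop ℝ) →
    ∀ n : ℤ, val (x ^ n) = (((n : ℝ) * r : ℝ) : WithTop ℝ))
variable (v_zero' : val 0 = ⊤)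
variable (v_negv : ∀ z : k, val (-z) = val z)

include hval_mul hval_add v_zpow' v_zero' in
lemma v_pow_diff_nat {x x' : k} (hx : x ≠ 0) (hx' : x' ≠ 0) {p₁ : ℝ}
    (hvx : val x = ((-p₁ : ℝ) : WithTop ℝ)) (hvx' : val x' = ((-p₁ : ℝ) : WithTop ℝ))
    {s : ℝ} (hs : ((s : ℝ) : WithTop ℝ) ≤ val (x - x')) :
    ∀ n : ℕ, (((s + (1 - (n : ℝ)) * p₁ : ℝ)) : WithTop ℝ) ≤ val (x ^ (n : ℤ) - x' ^ (n : ℤ)) := by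
  intro n
  induction n with
  | zero => simp [v_zero']
  | succ n ih =>
    have hsplit : x ^ ((n : ℤ) + 1) - x' ^ ((n : ℤ) + 1)
        = x ^ (n : ℤ) * (x - x') + x' * (x ^ (n : ℤ) - x' ^ (n : ℤ)) := by
      rw [zpow_add_one₀ hx, zpow_add_one₀ hx']
      ring
    have hc : ((n + 1 : ℕ) : ℤ) = (n : ℤ) + 1 := by push_cast; ring
    rw [hc, hsplit]
    refine le_trans ?_ (hval_add _ _)
    rw [le_min_iff]
    constructor
    · rw [hval_mul, v_zpow' hx hvx n]
      calc ((s + (1 - ((n + 1 : ℕ) : ℝ)) * p₁ : ℝ) : WithTop ℝ)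
          ≤ (((n : ℝ) * (-p₁) + s : ℝ) : WithTop ℝ) := by
            rw [WithTop.coe_le_coe]; push_cast; ring_nf; rfl
        _ ≤ (((n : ℝ) * (-p₁) : ℝ) : WithTop ℝ) + val (x - x') := by
            rw [WithTop.coe_add]
            exact add_le_add le_rfl hs
    · rw [hval_mul, hvx']
      calc ((s + (1 - ((n + 1 : ℕ) : ℝ)) * p₁ : ℝ) : WithTop ℝ)
          ≤ (((-p₁) + (s + (1 - (n : ℝ)) * p₁) : ℝ) : WithTop ℝ) := by
            rw [WithTop.coe_le_coe]; push_cast; ring_nf; rfl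
        _ ≤ ((-p₁ : ℝ) : WithTop ℝ) + val (x ^ (n : ℤ) - x' ^ (n : ℤ)) := by
            rw [WithTop.coe_add]
            exact add_le_add le_rfl ih

include hval_mul hval_add v_zpow' v_zero' v_negv in
lemma v_pow_diff {x x' : k} (hx : x ≠ 0) (hx' : x' ≠ 0) {p₁ : ℝ}
    (hvx : val x = ((-p₁ : ℝ) : WithTop ℝ)) (hvx' : val x' = ((-p₁ : ℝ) : WithTop ℝ))
    {s : ℝ} (hs : ((s : ℝ) : WithTop ℝ) ≤ val (x - x')) :
    ∀ n : ℤ, (((s + (1 - (n : ℝ)) * p₁ : ℝ)) : WithTop ℝ) ≤ val (x ^ n - x' ^ n) := by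
  intro n
  rcases le_or_gt 0 n with hn | hn
  · lift n to ℕ using hn
    exact v_pow_diff_nat val hval_mul hval_add @v_zpow' v_zero' hx hx' hvx hvx' hs n
  · have hmn : (0:ℤ) ≤ -n := by omega
    have hsplit : x ^ n - x' ^ n = (x' ^ (-n) - x ^ (-n)) * (x ^ n * x' ^ n) := by
      have h1 : x ^ n * x ^ (-n) = 1 := by rw [← zpow_add₀ hx]; simp
      have h2 : x' ^ n * x' ^ (-n) = 1 := by rw [← zpow_add₀ hx']; simp
      calc x ^ n - x' ^ n = (x' ^ (-n) * x' ^ n) * x ^ n - (x ^ (-n) * x ^ n) * x' ^ n := by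
            rw [mul_comm (x' ^ (-n)), mul_comm (x ^ (-n)), h1, h2]; ring
      _ = (x' ^ (-n) - x ^ (-n)) * (x ^ n * x' ^ n) := by ring
    have hs' : ((s : ℝ) : WithTop ℝ) ≤ val (x' - x) := by
      have h : x' - x = -(x - x') := by ring
      rw [h, v_negv]; exact hs
    have hbase := v_pow_diff_nat val hval_mul hval_add @v_zpow' v_zero'
      hx' hx hvx' hvx hs' (-n).toNat
    have htn : (((-n).toNat : ℤ)) = -n := Int.toNat_of_nonneg hmn
    rw [htn] at hbase
    have htnr : (((-n).toNat : ℝ)) = -(n : ℝ) := by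
      exact_mod_cast congrArg (fun z : ℤ => (z : ℝ)) htn
    rw [htnr] at hbase
    rw [hsplit, hval_mul, hval_mul, v_zpow' hx hvx n, v_zpow' hx' hvx' n]
    calc ((s + (1 - (n : ℝ)) * p₁ : ℝ) : WithTop ℝ)
        = (((s + (1 - -(n : ℝ)) * p₁) + ((n : ℝ) * (-p₁) + (n : ℝ) * (-p₁)) : ℝ) : WithTop ℝ) := by
          rw [WithTop.coe_eq_coe]; ring
      _ ≤ val (x' ^ (-n) - x ^ (-n))
            + ((((n : ℝ) * (-p₁) + (n : ℝ) * (-p₁)) : ℝ) : WithTop ℝ) := by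
          rw [WithTop.coe_add (s + (1 - -(n : ℝ)) * p₁) ((n : ℝ) * (-p₁) + (n : ℝ) * (-p₁))]
          exact add_le_add hbase le_rfl
      _ = val (x' ^ (-n) - x ^ (-n)) + (↑((n:ℝ) * -p₁) + ↑((n:ℝ) * -p₁)) := by
          rw [WithTop.coe_add]

end ValLemmas

section Core
variable {k : Type*} [Field k] (val : k → WithTop ℝ)
  (hval_mul : ∀ a b : k, val (a * b) = val a + val b)
  (hval_add : ∀ a b : k, min (val a) (val b) ≤ val (a + b))
  (hval_top : ∀ a : k, val a = ⊤ ↔ a = 0)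

-- assumed provable (from /tmp/val.lean /tmp/pd.lean):
variable (v_zero : val 0 = ⊤)
variable (v_neg : ∀ z : k, val (-z) = val z)
variable (v_sub_min : ∀ a b : k, min (val a) (val b) ≤ val (a - b))
variable (v_sub_eq_right : ∀ {a b : k}, val b < val a → val (a - b) = val b)
variable (v_zpow : ∀ {x : k}, x ≠ 0 → ∀ {r : ℝ}, val x = (r : WithTop ℝ) →
    ∀ n : ℤ, val (x ^ n) = (((n : ℝ) * r : ℝ) : WithTop ℝ))
variable (v_sum : ∀ {ι : Type} (s : Finset ι) (F : ι → k) (c : WithTop ℝ),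
    (∀ i ∈ s, c ≤ val (F i)) → c ≤ val (∑ i ∈ s, F i))
variable (v_pow_diff : ∀ {x x' : k}, x ≠ 0 → x' ≠ 0 → ∀ {p₁ : ℝ},
    val x = ((-p₁ : ℝ) : WithTop ℝ) → val x' = ((-p₁ : ℝ) : WithTop ℝ) →
    ∀ {s : ℝ}, ((s : ℝ) : WithTop ℝ) ≤ val (x - x') →
    ∀ n : ℤ, (((s + (1 - (n : ℝ)) * p₁ : ℝ)) : WithTop ℝ) ≤ val (x ^ n - x' ^ n))

include hval_mul hval_add hval_top v_zero v_neg v_sub_min v_sub_eq_right v_zpow v_sum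
  v_pow_diff in
lemma core_contradiction (f₁ f₂ : (ℤ × ℤ) →₀ k) (p₁ yp t t' : ℝ) (a : ℤ) (m : ℝ)
    (hm : 0 < m) (htt' : t < t') (ht' : t' ≤ yp)
    (hc₁ : val (f₂ (1,0)) = ((p₁ : ℝ) : WithTop ℝ))
    (hc'₁ : val (f₁ (1,0)) = ((p₁ : ℝ) : WithTop ℝ))
    (he : val (f₁ (a,1)) = (((a:ℝ) * p₁ + yp : ℝ) : WithTop ℝ))
    (hb₁ : ∀ i : ℤ × ℤ, i ≠ (0,0) → i ≠ (1,0) → i ≠ (a,1) →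
      ((m + ((i.1:ℝ) * p₁ + (i.2:ℝ) * yp) : ℝ) : WithTop ℝ) ≤ val (f₁ i))
    (hb₂ : ∀ i : ℤ × ℤ, i ≠ (0,0) → i ≠ (1,0) →
      ((m + ((i.1:ℝ) * p₁ + (i.2:ℝ) * yp) : ℝ) : WithTop ℝ) ≤ val (f₂ i))
    (hlow₁ : ∀ i : ℤ × ℤ, i.2 < 0 → f₁ i = 0) (hlow₂ : ∀ i : ℤ × ℤ, i.2 < 0 → f₂ i = 0)
    (x y x' y' : k) (hx : x ≠ 0) (hy : y ≠ 0) (hx' : x' ≠ 0) (hy' : y' ≠ 0)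
    (hvx : val x = ((-p₁ : ℝ) : WithTop ℝ)) (hvy : val y = ((-t : ℝ) : WithTop ℝ))
    (hvx' : val x' = ((-p₁ : ℝ) : WithTop ℝ)) (hvy' : val y' = ((-t' : ℝ) : WithTop ℝ))
    (hz1 : laurentEval f₁ x y = 0) (hz2 : laurentEval f₂ x y = 0)
    (hz1' : laurentEval f₁ x' y' = 0) (hz2' : laurentEval f₂ x' y' = 0) : False := by
  -- basic nonvanishing
  have hne_of_val : ∀ {z : k} {r : ℝ}, val z = (r : WithTop ℝ) → z ≠ 0 := by
    intro z r h hz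
    rw [hz, (hval_top 0).2 rfl] at h
    exact (WithTop.coe_ne_top h.symm)
  have hc₁ne : f₂ (1,0) ≠ 0 := hne_of_val hc₁
  have hene : f₁ (a,1) ≠ 0 := hne_of_val he
  -- valuations of monomials
  have vmono : ∀ (z w : k) (pz pw : ℝ), z ≠ 0 → w ≠ 0 →
      val z = ((pz : ℝ) : WithTop ℝ) → val w = ((pw : ℝ) : WithTop ℝ) →
      ∀ i : ℤ × ℤ, val (z ^ i.1 * w ^ i.2)
        = (((i.1 : ℝ) * pz + (i.2 : ℝ) * pw : ℝ) : WithTop ℝ) := by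
    intro z w pz pw hz hw hvz hvw i
    rw [hval_mul, v_zpow hz hvz i.1, v_zpow hw hvw i.2, ← WithTop.coe_add]
  -- bound for a term C * z^i1 * w^i2 given a bound on val C
  have vterm : ∀ (C : k) (z w : k) (pz pw : ℝ), z ≠ 0 → w ≠ 0 →
      val z = ((pz : ℝ) : WithTop ℝ) → val w = ((pw : ℝ) : WithTop ℝ) →
      ∀ (i : ℤ × ℤ) (c : ℝ), ((c : ℝ) : WithTop ℝ) ≤ val C →
      ((c + ((i.1 : ℝ) * pz + (i.2 : ℝ) * pw) : ℝ) : WithTop ℝ) ≤ val (C * z ^ i.1 * w ^ i.2) := by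
    intro C z w pz pw hz hw hvz hvw i c hc
    rw [mul_assoc, hval_mul, vmono z w pz pw hz hw hvz hvw i, WithTop.coe_add]
    exact add_le_add hc le_rfl
  -- cap
  set cap : ℝ := m + (yp - t') - p₁ with hcap
  -- Step lemma for the bootstrap
  have hK : ∀ s : ℝ, ((s : ℝ) : WithTop ℝ) ≤ val (x - x') →
      ((min cap (m + s) : ℝ) : WithTop ℝ) ≤ val (x - x') := by
    intro s hs
    have hsum : ∑ i ∈ f₂.support,
        (f₂ i * x ^ i.1 * y ^ i.2 - f₂ i * x' ^ i.1 * y' ^ i.2) = 0 := by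
      rw [Finset.sum_sub_distrib]
      have h1 : ∑ i ∈ f₂.support, f₂ i * x ^ i.1 * y ^ i.2 = 0 := hz2
      have h2 : ∑ i ∈ f₂.support, f₂ i * x' ^ i.1 * y' ^ i.2 = 0 := hz2'
      rw [h1, h2, sub_zero]
    have h10 : ((1,0) : ℤ × ℤ) ∈ f₂.support := Finsupp.mem_support_iff.2 hc₁ne
    rw [← Finset.add_sum_erase _ _ h10] at hsum
    have hterm10 : f₂ (1,0) * x ^ ((1,0) : ℤ × ℤ).1 * y ^ ((1,0) : ℤ × ℤ).2
        - f₂ (1,0) * x' ^ ((1,0) : ℤ × ℤ).1 * y' ^ ((1,0) : ℤ × ℤ).2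
        = f₂ (1,0) * (x - x') := by
      show f₂ (1,0) * x ^ (1:ℤ) * y ^ (0:ℤ) - f₂ (1,0) * x' ^ (1:ℤ) * y' ^ (0:ℤ) = _
      rw [zpow_one, zpow_one, zpow_zero, zpow_zero]
      ring
    rw [hterm10] at hsum
    have hmain : f₂ (1,0) * (x - x')
        = -∑ i ∈ f₂.support.erase (1,0),
            (f₂ i * x ^ i.1 * y ^ i.2 - f₂ i * x' ^ i.1 * y' ^ i.2) :=
      eq_neg_of_add_eq_zero_left hsum
    -- bound each term of the rest
    have hrest : ∀ i ∈ f₂.support.erase (1,0),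
        ((p₁ + min cap (m + s) : ℝ) : WithTop ℝ)
          ≤ val (f₂ i * x ^ i.1 * y ^ i.2 - f₂ i * x' ^ i.1 * y' ^ i.2) := by
      intro i hi
      have hi10 : i ≠ (1,0) := Finset.ne_of_mem_erase hi
      have hisup : i ∈ f₂.support := Finset.mem_of_mem_erase hi
      have hine : f₂ i ≠ 0 := Finsupp.mem_support_iff.1 hisup
      have hi2 : 0 ≤ i.2 := by
        by_contra h
        exact hine (hlow₂ i (by omega))
      rcases eq_or_ne i ((0,0) : ℤ × ℤ) with rfl | hi00
      · -- constant term cancels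
        have : f₂ ((0,0) : ℤ × ℤ) * x ^ ((0,0) : ℤ × ℤ).1 * y ^ ((0,0) : ℤ × ℤ).2
            - f₂ ((0,0) : ℤ × ℤ) * x' ^ ((0,0) : ℤ × ℤ).1 * y' ^ ((0,0) : ℤ × ℤ).2 = 0 := by
          show f₂ _ * x ^ (0:ℤ) * y ^ (0:ℤ) - f₂ _ * x' ^ (0:ℤ) * y' ^ (0:ℤ) = 0
          rw [zpow_zero, zpow_zero, zpow_zero, zpow_zero]
          ring
        rw [this, v_zero]
        exact le_top
      · have hbcoef := hb₂ i hi00 hi10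
        rcases eq_or_lt_of_le hi2 with hi2e | hi2p
        · -- i.2 = 0 : use the power-difference bound
          have hdiff : f₂ i * x ^ i.1 * y ^ i.2 - f₂ i * x' ^ i.1 * y' ^ i.2
              = f₂ i * (x ^ i.1 - x' ^ i.1) := by
            rw [← hi2e, zpow_zero, zpow_zero]; ring
          rw [hdiff, hval_mul]
          have hpd := v_pow_diff hx hx' hvx hvx' hs i.1
          have hi2r : (i.2 : ℝ) = 0 := by rw [← hi2e]; norm_num
          calc ((p₁ + min cap (m + s) : ℝ) : WithTop ℝ)
              ≤ (((m + ((i.1:ℝ) * p₁ + (i.2:ℝ) * yp)) + (s + (1 - (i.1:ℝ)) * p₁) : ℝ) : WithTop ℝ) := by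
                rw [WithTop.coe_le_coe]
                have h1 : min cap (m + s) ≤ m + s := min_le_right _ _
                rw [hi2r]
                linarith
            _ ≤ val (f₂ i) + val (x ^ i.1 - x' ^ i.1) := by
                rw [WithTop.coe_add]
                exact add_le_add hbcoef hpd
        · -- i.2 ≥ 1 : both monomials are small
          have h1le : (1:ℝ) ≤ (i.2:ℝ) := by exact_mod_cast hi2p
          have hbound : ∀ (z w : k) (tt : ℝ), z ≠ 0 → w ≠ 0 →
              val z = ((-p₁ : ℝ) : WithTop ℝ) → val w = ((-tt : ℝ) : WithTop ℝ) → tt ≤ t' →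
              ((p₁ + min cap (m + s) : ℝ) : WithTop ℝ) ≤ val (f₂ i * z ^ i.1 * w ^ i.2) := by
            intro z w tt hz hw hvz hvw htt
            refine le_trans ?_ (vterm (f₂ i) z w (-p₁) (-tt) hz hw hvz hvw i
              (m + ((i.1:ℝ) * p₁ + (i.2:ℝ) * yp)) hbcoef)
            rw [WithTop.coe_le_coe]
            have hmin : min cap (m + s) ≤ cap := min_le_left _ _
            have : (yp - t') ≤ (i.2:ℝ) * (yp - tt) := by nlinarith
            push_cast
            linarith [hcap]
          refine le_trans (le_min ?_ ?_) (v_sub_min _ _) <;>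
            [exact hbound x y t hx hy hvx hvy htt'.le;
             exact hbound x' y' t' hx' hy' hvx' hvy' le_rfl]
    have hv : ((p₁ + min cap (m + s) : ℝ) : WithTop ℝ) ≤ val (f₂ (1,0) * (x - x')) := by
      rw [hmain, v_neg]
      exact v_sum _ _ _ hrest
    rw [hval_mul, hc₁, WithTop.coe_add] at hv
    exact (WithTop.add_le_add_iff_left (WithTop.coe_ne_top (a := p₁))).1 hv
  -- bootstrap
  have hboot : ∀ n : ℕ, ((min cap ((n : ℝ) * m - p₁) : ℝ) : WithTop ℝ) ≤ val (x - x') := by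
    intro n
    induction n with
    | zero =>
      have h0 : ((-p₁ : ℝ) : WithTop ℝ) ≤ val (x - x') := by
        refine le_trans ?_ (v_sub_min x x')
        rw [hvx, hvx']
        simp
      refine le_trans ?_ h0
      rw [WithTop.coe_le_coe]
      have := min_le_right cap ((0:ℕ) * m - p₁)
      push_cast at this ⊢
      linarith
    | succ n ih =>
      have hstep := hK (min cap ((n : ℝ) * m - p₁)) ih
      refine le_trans ?_ hstep
      rw [WithTop.coe_le_coe]
      rcases le_total cap ((n : ℝ) * m - p₁) with h | h
      · have : min cap ((n : ℝ) * m - p₁) = cap := min_eq_left h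
        rw [this]
        have h1 : min cap (((n+1:ℕ) : ℝ) * m - p₁) ≤ cap := min_le_left _ _
        have h2 : cap ≤ m + cap := by linarith
        exact le_min h1 (le_trans h1 h2)
      · have : min cap ((n : ℝ) * m - p₁) = (n : ℝ) * m - p₁ := min_eq_right h
        rw [this]
        refine min_le_min le_rfl ?_
        push_cast
        linarith
  have hsig : ((cap : ℝ) : WithTop ℝ) ≤ val (x - x') := by
    obtain ⟨n, hn⟩ := exists_nat_ge ((m + (yp - t')) / m)
    have hn' : m + (yp - t') ≤ (n : ℝ) * m := by
      rw [div_le_iff₀ hm] at hn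
      linarith
    have := hboot n
    rwa [min_eq_left (by rw [hcap]; linarith)] at this
  -- the main combination
  set T : Finset (ℤ × ℤ) := f₁.support ∪ f₂.support with hT
  have key : ∀ (F : (ℤ × ℤ) →₀ k), F.support ⊆ T → ∀ z w : k, laurentEval F z w = 0 →
      ∑ i ∈ T, F i * z ^ i.1 * w ^ i.2 = 0 := by
    intro F hFT z w h
    rw [← Finset.sum_subset hFT (fun i _ hi => by
      rw [Finsupp.notMem_support_iff.1 hi, zero_mul, zero_mul])]
    exact h
  have e1 := key f₁ Finset.subset_union_left x y hz1
  have e2 := key f₂ Finset.subset_union_right x y hz2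
  have e3 := key f₁ Finset.subset_union_left x' y' hz1'
  have e4 := key f₂ Finset.subset_union_right x' y' hz2'
  set E : (ℤ × ℤ) → k := fun i => f₁ (1,0) * f₂ i - f₂ (1,0) * f₁ i with hEdef
  have hEi : ∀ i, E i = f₁ (1,0) * f₂ i - f₂ (1,0) * f₁ i := fun i => rfl
  have hsumT : ∑ i ∈ T, (E i * x ^ i.1 * y ^ i.2 - E i * x' ^ i.1 * y' ^ i.2) = 0 := by
    calc ∑ i ∈ T, (E i * x ^ i.1 * y ^ i.2 - E i * x' ^ i.1 * y' ^ i.2)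
        = ∑ i ∈ T, ((f₁ (1,0) * (f₂ i * x ^ i.1 * y ^ i.2)
              - f₂ (1,0) * (f₁ i * x ^ i.1 * y ^ i.2))
            - (f₁ (1,0) * (f₂ i * x' ^ i.1 * y' ^ i.2)
              - f₂ (1,0) * (f₁ i * x' ^ i.1 * y' ^ i.2))) := by
          refine Finset.sum_congr rfl fun i _ => ?_
          rw [hEi i]
          ring
      _ = (f₁ (1,0) * ∑ i ∈ T, f₂ i * x ^ i.1 * y ^ i.2
            - f₂ (1,0) * ∑ i ∈ T, f₁ i * x ^ i.1 * y ^ i.2)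
          - (f₁ (1,0) * ∑ i ∈ T, f₂ i * x' ^ i.1 * y' ^ i.2
            - f₂ (1,0) * ∑ i ∈ T, f₁ i * x' ^ i.1 * y' ^ i.2) := by
          rw [Finset.sum_sub_distrib, Finset.sum_sub_distrib, Finset.sum_sub_distrib,
            Finset.mul_sum, Finset.mul_sum, Finset.mul_sum, Finset.mul_sum]
      _ = 0 := by rw [e1, e2, e3, e4]; ring
  have ha1T : ((a,1) : ℤ × ℤ) ∈ T :=
    Finset.mem_union_left _ (Finsupp.mem_support_iff.2 hene)
  rw [← Finset.add_sum_erase _ _ ha1T] at hsumT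
  have hmaineq : E (a,1) * x ^ ((a,1) : ℤ × ℤ).1 * y ^ ((a,1) : ℤ × ℤ).2
      - E (a,1) * x' ^ ((a,1) : ℤ × ℤ).1 * y' ^ ((a,1) : ℤ × ℤ).2
      = -∑ i ∈ T.erase (a,1), (E i * x ^ i.1 * y ^ i.2 - E i * x' ^ i.1 * y' ^ i.2) :=
    eq_neg_of_add_eq_zero_left hsumT
  -- exact valuation of the pivotal coefficient
  have hb2a : ((m + ((a:ℝ) * p₁ + (1:ℝ) * yp) : ℝ) : WithTop ℝ) ≤ val (f₂ (a,1)) := by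
    have := hb₂ (a,1) (by simp) (by simp)
    convert this using 3 <;> norm_num
  have hEa : val (E (a,1)) = ((p₁ + ((a:ℝ) * p₁ + yp) : ℝ) : WithTop ℝ) := by
    have h1 : val (f₂ (1,0) * f₁ (a,1)) = ((p₁ + ((a:ℝ) * p₁ + yp) : ℝ) : WithTop ℝ) := by
      rw [hval_mul, hc₁, he, ← WithTop.coe_add]
    have h2 : val (f₂ (1,0) * f₁ (a,1)) < val (f₁ (1,0) * f₂ (a,1)) := by
      rw [h1, hval_mul, hc'₁]
      calc ((p₁ + ((a:ℝ) * p₁ + yp) : ℝ) : WithTop ℝ)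
          < ((p₁ + (m + ((a:ℝ) * p₁ + (1:ℝ) * yp)) : ℝ) : WithTop ℝ) := by
            rw [WithTop.coe_lt_coe]; linarith
        _ = ((p₁ : ℝ) : WithTop ℝ) + ((m + ((a:ℝ) * p₁ + (1:ℝ) * yp) : ℝ) : WithTop ℝ) := by
            rw [← WithTop.coe_add]
        _ ≤ ((p₁ : ℝ) : WithTop ℝ) + val (f₂ (a,1)) := add_le_add le_rfl hb2a
    rw [hEi, v_sub_eq_right h2, h1]
  -- exact valuation of the pivotal term difference
  have hv1 : val (E (a,1) * x ^ ((a,1) : ℤ × ℤ).1 * y ^ ((a,1) : ℤ × ℤ).2)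
      = ((p₁ + (yp - t) : ℝ) : WithTop ℝ) := by
    rw [mul_assoc, hval_mul, hEa, vmono x y (-p₁) (-t) hx hy hvx hvy (a,1),
      ← WithTop.coe_add, WithTop.coe_eq_coe]
    norm_num
    ring
  have hv1' : val (E (a,1) * x' ^ ((a,1) : ℤ × ℤ).1 * y' ^ ((a,1) : ℤ × ℤ).2)
      = ((p₁ + (yp - t') : ℝ) : WithTop ℝ) := by
    rw [mul_assoc, hval_mul, hEa, vmono x' y' (-p₁) (-t') hx' hy' hvx' hvy' (a,1),
      ← WithTop.coe_add, WithTop.coe_eq_coe]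
    norm_num
    ring
  have hmainv : val (E (a,1) * x ^ ((a,1) : ℤ × ℤ).1 * y ^ ((a,1) : ℤ × ℤ).2
      - E (a,1) * x' ^ ((a,1) : ℤ × ℤ).1 * y' ^ ((a,1) : ℤ × ℤ).2)
      = ((p₁ + (yp - t') : ℝ) : WithTop ℝ) := by
    rw [v_sub_eq_right (by rw [hv1, hv1', WithTop.coe_lt_coe]; linarith), hv1']
  -- bound the remaining terms
  have hrest : ∀ i ∈ T.erase (a,1),
      ((p₁ + m + (yp - t') : ℝ) : WithTop ℝ)
        ≤ val (E i * x ^ i.1 * y ^ i.2 - E i * x' ^ i.1 * y' ^ i.2) := by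
    intro i hi
    have hia : i ≠ (a,1) := Finset.ne_of_mem_erase hi
    rcases lt_or_ge i.2 0 with hneg | hi2
    · have hE0 : E i = 0 := by rw [hEi, hlow₁ i hneg, hlow₂ i hneg]; ring
      rw [hE0, zero_mul, zero_mul, zero_mul, zero_mul, sub_zero, v_zero]
      exact le_top
    rcases eq_or_ne i ((0,0) : ℤ × ℤ) with rfl | hi00
    · have : E ((0,0) : ℤ × ℤ) * x ^ ((0,0) : ℤ × ℤ).1 * y ^ ((0,0) : ℤ × ℤ).2
          - E ((0,0) : ℤ × ℤ) * x' ^ ((0,0) : ℤ × ℤ).1 * y' ^ ((0,0) : ℤ × ℤ).2 = 0 := by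
        show E _ * x ^ (0:ℤ) * y ^ (0:ℤ) - E _ * x' ^ (0:ℤ) * y' ^ (0:ℤ) = 0
        rw [zpow_zero, zpow_zero, zpow_zero, zpow_zero]
        ring
      rw [this, v_zero]
      exact le_top
    rcases eq_or_ne i ((1,0) : ℤ × ℤ) with rfl | hi10
    · have hE0 : E ((1,0) : ℤ × ℤ) = 0 := by rw [hEi]; ring
      rw [hE0, zero_mul, zero_mul, zero_mul, zero_mul, sub_zero, v_zero]
      exact le_top
    have hbE : ((p₁ + (m + ((i.1:ℝ) * p₁ + (i.2:ℝ) * yp)) : ℝ) : WithTop ℝ) ≤ val (E i) := by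
      rw [hEi]
      refine le_trans ?_ (v_sub_min _ _)
      rw [le_min_iff]
      constructor
      · rw [hval_mul, hc'₁, WithTop.coe_add]
        exact add_le_add le_rfl (hb₂ i hi00 hi10)
      · rw [hval_mul, hc₁, WithTop.coe_add]
        exact add_le_add le_rfl (hb₁ i hi00 hi10 hia)
    rcases eq_or_lt_of_le hi2 with hi2e | hi2p
    · have hdiff : E i * x ^ i.1 * y ^ i.2 - E i * x' ^ i.1 * y' ^ i.2
          = E i * (x ^ i.1 - x' ^ i.1) := by
        rw [← hi2e, zpow_zero, zpow_zero]
        ring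
      rw [hdiff, hval_mul]
      have hpd := v_pow_diff hx hx' hvx hvx' hsig i.1
      have hi2r : (i.2:ℝ) = 0 := by rw [← hi2e]; norm_num
      calc ((p₁ + m + (yp - t') : ℝ) : WithTop ℝ)
          ≤ (((p₁ + (m + ((i.1:ℝ) * p₁ + (i.2:ℝ) * yp))) + (cap + (1 - (i.1:ℝ)) * p₁) : ℝ) : WithTop ℝ) := by
            rw [WithTop.coe_le_coe, hi2r, hcap]
            linarith
        _ ≤ val (E i) + val (x ^ i.1 - x' ^ i.1) := by
            rw [WithTop.coe_add]
            exact add_le_add hbE hpd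
    · have h1le : (1:ℝ) ≤ (i.2:ℝ) := by exact_mod_cast hi2p
      have hboundE : ∀ (z w : k) (tt : ℝ), z ≠ 0 → w ≠ 0 →
          val z = ((-p₁ : ℝ) : WithTop ℝ) → val w = ((-tt : ℝ) : WithTop ℝ) → tt ≤ t' →
          ((p₁ + m + (yp - t') : ℝ) : WithTop ℝ) ≤ val (E i * z ^ i.1 * w ^ i.2) := by
        intro z w tt hz hw hvz hvw htt
        refine le_trans ?_ (vterm (E i) z w (-p₁) (-tt) hz hw hvz hvw i
          (p₁ + (m + ((i.1:ℝ) * p₁ + (i.2:ℝ) * yp))) hbE)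
        rw [WithTop.coe_le_coe]
        have : (yp - t') ≤ (i.2:ℝ) * (yp - tt) := by nlinarith
        linarith
      refine le_trans (le_min ?_ ?_) (v_sub_min _ _)
      · exact hboundE x y t hx hy hvx hvy htt'.le
      · exact hboundE x' y' t' hx' hy' hvx' hvy' le_rfl
  have hfin : ((p₁ + m + (yp - t') : ℝ) : WithTop ℝ) ≤ ((p₁ + (yp - t') : ℝ) : WithTop ℝ) := by
    rw [← hmainv, hmaineq, v_neg]
    exact v_sum _ _ _ hrest
  rw [WithTop.coe_le_coe] at hfin
  linarith

end Core

theorem stmt13 {k : Type*} [Field k] [IsAlgClosed k] (val : k → WithTop ℝ)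
    (hval_mul : ∀ a b : k, val (a * b) = val a + val b)
    (hval_add : ∀ a b : k, min (val a) (val b) ≤ val (a + b))
    (hval_top : ∀ a : k, val a = ⊤ ↔ a = 0)
    (hval_nontriv : ∃ a : k, val a ≠ 0 ∧ val a ≠ ⊤)
    (f g : (ℤ × ℤ) →₀ k) (p₁ : ℝ)
    (hf00 : val (f (0, 0)) = (0 : WithTop ℝ)) (hg00 : val (g (0, 0)) = (0 : WithTop ℝ))
    (hf10 : val (f (1, 0)) = (p₁ : WithTop ℝ)) (hg10 : val (g (1, 0)) = (p₁ : WithTop ℝ))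
    (hlow : ∀ i : ℤ × ℤ, i.2 < 0 → f i = 0 ∧ g i = 0)
    (yp : ℝ) (a : ℤ)
    (f₁ f₂ : (ℤ × ℤ) →₀ k) (hlab : (f₁ = f ∧ f₂ = g) ∨ (f₁ = g ∧ f₂ = f))
    (hmax1 : {i : ℤ × ℤ | tau val (⇑f₁) i (p₁, yp) = (⨆ j : ℤ × ℤ, tau val (⇑f₁) j (p₁, yp))}
      = {((0 : ℤ), (0 : ℤ)), ((1 : ℤ), (0 : ℤ)), (a, (1 : ℤ))})
    (hmax2 : {i : ℤ × ℤ | tau val (⇑f₂) i (p₁, yp) = (⨆ j : ℤ × ℤ, tau val (⇑f₂) j (p₁, yp))}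
      = {((0 : ℤ), (0 : ℤ)), ((1 : ℤ), (0 : ℤ))})
    (hmaxint : ∀ t : ℝ, t < yp →
      {i : ℤ × ℤ | tau val (⇑f) i (p₁, t) = (⨆ j : ℤ × ℤ, tau val (⇑f) j (p₁, t))}
        = {((0 : ℤ), (0 : ℤ)), ((1 : ℤ), (0 : ℤ))} ∧
      {i : ℤ × ℤ | tau val (⇑g) i (p₁, t) = (⨆ j : ℤ × ℤ, tau val (⇑g) j (p₁, t))}
        = {((0 : ℤ), (0 : ℤ)), ((1 : ℤ), (0 : ℤ))}) :
    Set.Subsingleton (tropV val f g ∩ {P : ℝ × ℝ | P.1 = p₁ ∧ P.2 ≤ yp}) := by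
  clear hval_nontriv hmaxint
  -- transfer coefficient data to f₁, f₂
  have hf₁00 : val (f₁ (0, 0)) = (0 : WithTop ℝ) := by
    rcases hlab with ⟨h1, _⟩ | ⟨h1, _⟩ <;> rw [h1] <;> assumption
  have hf₂00 : val (f₂ (0, 0)) = (0 : WithTop ℝ) := by
    rcases hlab with ⟨_, h2⟩ | ⟨_, h2⟩ <;> rw [h2] <;> assumption
  have hc'₁ : val (f₁ (1, 0)) = (p₁ : WithTop ℝ) := by
    rcases hlab with ⟨h1, _⟩ | ⟨h1, _⟩ <;> rw [h1] <;> assumption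
  have hc₁ : val (f₂ (1, 0)) = (p₁ : WithTop ℝ) := by
    rcases hlab with ⟨_, h2⟩ | ⟨_, h2⟩ <;> rw [h2] <;> assumption
  have hlow₁ : ∀ i : ℤ × ℤ, i.2 < 0 → f₁ i = 0 := by
    intro i hi
    rcases hlab with ⟨h1, _⟩ | ⟨h1, _⟩ <;> rw [h1]
    exacts [(hlow i hi).1, (hlow i hi).2]
  have hlow₂ : ∀ i : ℤ × ℤ, i.2 < 0 → f₂ i = 0 := by
    intro i hi
    rcases hlab with ⟨_, h2⟩ | ⟨_, h2⟩ <;> rw [h2]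
    exacts [(hlow i hi).2, (hlow i hi).1]
  have hzz : ∀ x y : k, laurentEval f x y = 0 → laurentEval g x y = 0 →
      laurentEval f₁ x y = 0 ∧ laurentEval f₂ x y = 0 := by
    intro x y h1 h2
    rcases hlab with ⟨ha, hb⟩ | ⟨ha, hb⟩ <;> rw [ha, hb]
    exacts [⟨h1, h2⟩, ⟨h2, h1⟩]
  -- the suprema are 0
  have htau001 : tau val (⇑f₁) ((0,0) : ℤ × ℤ) (p₁, yp) = 0 := by
    rw [tau_coe val (⇑f₁) ((0,0) : ℤ × ℤ) (p₁, yp) (r := 0) (by rw [hf₁00]; norm_num)]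
    norm_num
  have htau002 : tau val (⇑f₂) ((0,0) : ℤ × ℤ) (p₁, yp) = 0 := by
    rw [tau_coe val (⇑f₂) ((0,0) : ℤ × ℤ) (p₁, yp) (r := 0) (by rw [hf₂00]; norm_num)]
    norm_num
  have hsup1 : (⨆ j : ℤ × ℤ, tau val (⇑f₁) j (p₁, yp)) = 0 := by
    have hm : ((0,0) : ℤ × ℤ) ∈ {i : ℤ × ℤ | tau val (⇑f₁) i (p₁, yp)
        = ⨆ j : ℤ × ℤ, tau val (⇑f₁) j (p₁, yp)} := by
      rw [hmax1]; simp
    have h := Set.mem_setOf.mp hm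
    rw [← h]
    exact htau001
  have hsup2 : (⨆ j : ℤ × ℤ, tau val (⇑f₂) j (p₁, yp)) = 0 := by
    have hm : ((0,0) : ℤ × ℤ) ∈ {i : ℤ × ℤ | tau val (⇑f₂) i (p₁, yp)
        = ⨆ j : ℤ × ℤ, tau val (⇑f₂) j (p₁, yp)} := by
      rw [hmax2]; simp
    have h := Set.mem_setOf.mp hm
    rw [← h]
    exact htau002
  -- value at the pivot (a,1)
  have hea : tau val (⇑f₁) ((a,1) : ℤ × ℤ) (p₁, yp) = 0 := by
    have hm : ((a,1) : ℤ × ℤ) ∈ {i : ℤ × ℤ | tau val (⇑f₁) i (p₁, yp)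
        = ⨆ j : ℤ × ℤ, tau val (⇑f₁) j (p₁, yp)} := by
      rw [hmax1]; simp
    rw [Set.mem_setOf.mp hm, hsup1]
  have he : val (f₁ (a,1)) = (((a:ℝ) * p₁ + yp : ℝ) : WithTop ℝ) := by
    rw [val_of_tau_eq_zero val (⇑f₁) ((a,1) : ℤ × ℤ) (p₁, yp) hea, WithTop.coe_eq_coe]
    norm_num
  -- strict bounds away from the maximizing sets
  have hstrict : ∀ (F : (ℤ × ℤ) →₀ k) (M : Set (ℤ × ℤ)),
      {i : ℤ × ℤ | tau val (⇑F) i (p₁, yp) = ⨆ j : ℤ × ℤ, tau val (⇑F) j (p₁, yp)} = M →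
      (⨆ j : ℤ × ℤ, tau val (⇑F) j (p₁, yp)) = 0 →
      ∀ i ∈ F.support, i ∉ M →
        ((((i.1:ℝ) * p₁ + (i.2:ℝ) * yp : ℝ)) : WithTop ℝ) < val (F i) := by
    intro F M hM hsup i hisup hiM
    have hne : val (F i) ≠ ⊤ := fun h => Finsupp.mem_support_iff.1 hisup ((hval_top _).1 h)
    have hlt : tau val (⇑F) i (p₁, yp) < 0 := by
      refine lt_of_le_of_ne ?_ ?_
      · rw [← hsup]
        exact le_iSup (fun j => tau val (⇑F) j (p₁, yp)) i
      · intro h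
        exact hiM (hM ▸ (Set.mem_setOf.mpr (by rw [h, hsup])))
    obtain ⟨r, hr, hqr⟩ := real_of_tau_lt_zero val (⇑F) i (p₁, yp) hlt hne
    rw [hr, WithTop.coe_lt_coe]
    exact hqr
  obtain ⟨μ₁, hμ₁, hm₁⟩ := exists_margin
    (f₁.support \ ({(0,0), (1,0), (a,1)} : Finset (ℤ × ℤ)))
    (fun i => val (f₁ i)) (fun i => (i.1:ℝ) * p₁ + (i.2:ℝ) * yp) (by
      intro i hi
      rw [Finset.mem_sdiff] at hi
      refine hstrict f₁ _ hmax1 hsup1 i hi.1 ?_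
      intro hmem
      apply hi.2
      simp only [Set.mem_insert_iff, Set.mem_singleton_iff] at hmem
      simp only [Finset.mem_insert, Finset.mem_singleton]
      exact hmem)
  obtain ⟨μ₂, hμ₂, hm₂⟩ := exists_margin
    (f₂.support \ ({(0,0), (1,0)} : Finset (ℤ × ℤ)))
    (fun i => val (f₂ i)) (fun i => (i.1:ℝ) * p₁ + (i.2:ℝ) * yp) (by
      intro i hi
      rw [Finset.mem_sdiff] at hi
      refine hstrict f₂ _ hmax2 hsup2 i hi.1 ?_
      intro hmem
      apply hi.2
      simp only [Set.mem_insert_iff, Set.mem_singleton_iff] at hmem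
      simp only [Finset.mem_insert, Finset.mem_singleton]
      exact hmem)
  have hb₁' : ∀ i : ℤ × ℤ, i ≠ (0,0) → i ≠ (1,0) → i ≠ (a,1) →
      ((μ₁ + ((i.1:ℝ) * p₁ + (i.2:ℝ) * yp) : ℝ) : WithTop ℝ) ≤ val (f₁ i) := by
    intro i h1 h2 h3
    by_cases hs : i ∈ f₁.support
    · refine hm₁ i (Finset.mem_sdiff.2 ⟨hs, ?_⟩)
      simp only [Finset.mem_insert, Finset.mem_singleton, not_or]
      exact ⟨h1, h2, h3⟩
    · rw [Finsupp.notMem_support_iff.1 hs, (hval_top (0:k)).2 rfl]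
      exact le_top
  have hb₂' : ∀ i : ℤ × ℤ, i ≠ (0,0) → i ≠ (1,0) →
      ((μ₂ + ((i.1:ℝ) * p₁ + (i.2:ℝ) * yp) : ℝ) : WithTop ℝ) ≤ val (f₂ i) := by
    intro i h1 h2
    by_cases hs : i ∈ f₂.support
    · refine hm₂ i (Finset.mem_sdiff.2 ⟨hs, ?_⟩)
      simp only [Finset.mem_insert, Finset.mem_singleton, not_or]
      exact ⟨h1, h2⟩
    · rw [Finsupp.notMem_support_iff.1 hs, (hval_top (0:k)).2 rfl]
      exact le_top
  set m := min μ₁ μ₂ with hmdef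
  have hm : 0 < m := lt_min hμ₁ hμ₂
  have hb₁ : ∀ i : ℤ × ℤ, i ≠ (0,0) → i ≠ (1,0) → i ≠ (a,1) →
      ((m + ((i.1:ℝ) * p₁ + (i.2:ℝ) * yp) : ℝ) : WithTop ℝ) ≤ val (f₁ i) := by
    intro i h1 h2 h3
    refine le_trans ?_ (hb₁' i h1 h2 h3)
    rw [WithTop.coe_le_coe]
    have := min_le_left μ₁ μ₂
    linarith
  have hb₂ : ∀ i : ℤ × ℤ, i ≠ (0,0) → i ≠ (1,0) →
      ((m + ((i.1:ℝ) * p₁ + (i.2:ℝ) * yp) : ℝ) : WithTop ℝ) ≤ val (f₂ i) := by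
    intro i h1 h2
    refine le_trans ?_ (hb₂' i h1 h2)
    rw [WithTop.coe_le_coe]
    have := min_le_right μ₁ μ₂
    linarith
  -- package the auxiliary valuation lemmas
  have vz : val 0 = ⊤ := v_zero val hval_top
  have vn : ∀ z : k, val (-z) = val z := v_neg val hval_mul hval_top
  have vsm : ∀ a b : k, min (val a) (val b) ≤ val (a - b) :=
    v_sub_min val hval_mul hval_add hval_top
  have vser : ∀ {a b : k}, val b < val a → val (a - b) = val b :=
    fun h => v_sub_eq_right val hval_mul hval_add hval_top h
  have vzp : ∀ {x : k}, x ≠ 0 → ∀ {r : ℝ}, val x = (r : WithTop ℝ) →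
      ∀ n : ℤ, val (x ^ n) = (((n : ℝ) * r : ℝ) : WithTop ℝ) :=
    fun {x} hx {r} hr n => v_zpow val hval_mul hval_top hx hr n
  have vsum : ∀ {ι : Type} (s : Finset ι) (F : ι → k) (c : WithTop ℝ),
      (∀ i ∈ s, c ≤ val (F i)) → c ≤ val (∑ i ∈ s, F i) :=
    fun s F c h => v_sum val hval_add hval_top s F c h
  have vpd : ∀ {x x' : k}, x ≠ 0 → x' ≠ 0 → ∀ {q : ℝ},
      val x = ((-q : ℝ) : WithTop ℝ) → val x' = ((-q : ℝ) : WithTop ℝ) →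
      ∀ {s : ℝ}, ((s : ℝ) : WithTop ℝ) ≤ val (x - x') →
      ∀ n : ℤ, (((s + (1 - (n : ℝ)) * q : ℝ)) : WithTop ℝ) ≤ val (x ^ n - x' ^ n) :=
    fun {x x'} hx hx' {q} hvx hvx' {s} hs n =>
      v_pow_diff val hval_mul hval_add (fun {x} hx {r} hr n => v_zpow val hval_mul hval_top hx hr n)
        (v_zero val hval_top) (v_neg val hval_mul hval_top) hx hx' hvx hvx' hs n
  -- main argument
  intro P hP Q hQ
  obtain ⟨⟨x, y, hx, hy, hfx, hgx, hvx, hvy⟩, hP1, hP2⟩ := hP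
  obtain ⟨⟨x', y', hx', hy', hfx', hgx', hvx', hvy'⟩, hQ1, hQ2⟩ := hQ
  obtain ⟨hz1, hz2⟩ := hzz x y hfx hgx
  obtain ⟨hz1', hz2'⟩ := hzz x' y' hfx' hgx'
  rw [hP1] at hvx
  rw [hQ1] at hvx'
  apply Prod.ext
  · rw [hP1, hQ1]
  · by_contra hne
    rcases lt_trichotomy P.2 Q.2 with hlt | heq | hlt
    · exact core_contradiction val hval_mul hval_add hval_top vz vn vsm @vser @vzp @vsum @vpd
        f₁ f₂ p₁ yp P.2 Q.2 a m hm hlt hQ2 hc₁ hc'₁ he hb₁ hb₂ hlow₁ hlow₂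
        x y x' y' hx hy hx' hy' hvx hvy hvx' hvy' hz1 hz2 hz1' hz2'
    · exact hne heq
    · exact core_contradiction val hval_mul hval_add hval_top vz vn vsm @vser @vzp @vsum @vpd
        f₁ f₂ p₁ yp Q.2 P.2 a m hm hlt hP2 hc₁ hc'₁ he hb₁ hb₂ hlow₁ hlow₂
        x' y' x y hx' hy' hx hy hvx' hvy' hvx hvy hz1' hz2' hz1 hz2
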